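/- arXiv:2509.24095 — 6 statements merged into one kernel-verified Lean document; each statement's English description precedes it below -/
import Mathlib

section
/- Assume additionally that γ_1 > γ_2 > … > γ_K > 0 (strictly decreasing). Let 0 ≤ η₁ < η₂, and for each j ∈ {1,2} let S_j be a minimizer of ℓ(·;η_j) over subsets of {1,…,K} of minimal cardinality among all such minimizers. Then S₁ ⊆ S₂. -/
open Finset

noncomputable def Gam (γ : ℕ → ℝ) (k : ℕ) : ℝ := ∑ i ∈ Finset.Icc 1 k, γ i

noncomputable def gfun (lam : ℝ) (k : ℕ) : ℝ := (if 1 < k then 1 else 0) + lam * (k : ℝ)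

noncomputable def Psi (γ : ℕ → ℝ) (lam η : ℝ) (k : ℕ) : ℝ := gfun lam k - η * Gam γ k

noncomputable def kappa (γ : ℕ → ℝ) (lam : ℝ) (K : ℕ) (η : ℝ) : ℕ :=
  sInf {k : ℕ | k ≤ K ∧ ∀ j ≤ K, Psi γ lam η k ≤ Psi γ lam η j}

noncomputable def score (γ : ℕ → ℝ) (lam : ℝ) (K : ℕ) (i : ℕ) : ℝ :=
  sInf {η : ℝ | 0 ≤ η ∧ i ≤ kappa γ lam K η}

noncomputable def ell (γ : ℕ → ℝ) (lam η : ℝ) (S : Finset ℕ) : ℝ :=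
  (if 1 < S.card then 1 else 0) + lam * (S.card : ℝ) - η * ∑ i ∈ S, γ i

noncomputable def etaSlope (γ : ℕ → ℝ) (lam : ℝ) (v : ℕ → ℕ) (i : ℕ) : ℝ :=
  (gfun lam (v i) - gfun lam (v (i - 1))) / (Gam γ (v i) - Gam γ (v (i - 1)))

/-!
For `η > 0` every minimizer of `ell · η` is a prefix `{1, …, m}`: replacing a non-prefix by the
prefix of the same size keeps the cost part and strictly increases `∑ γ`. For `η = 0` the
minimal-cardinality minimizer is `∅`, also a prefix. So both sets are prefixes and it suffices
to compare their sizes. If `#S₂ < #S₁`, minimality of `#S₁` makes `S₁` strictly better than `S₂`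
at `η₁`, while `S₂` is at least as good at `η₂`; since `ell` is affine in `η` with slope `-∑ γ`,
this forces `∑_{S₁} γ < ∑_{S₂} γ`, impossible for prefixes `S₂ ⊆ S₁` of nonnegative weights.
-/

section Prefix

variable {γ : ℕ → ℝ} {K : ℕ}

lemma sum_lt_sum_Icc_card (hγ : StrictAntiOn γ (Set.Icc 1 K)) {S : Finset ℕ}
    (hS : S ⊆ Icc 1 K) (hne : S ≠ Icc 1 #S) :
    ∑ i ∈ S, γ i < ∑ i ∈ Icc 1 #S, γ i := by
  set A := Icc 1 #S
  have hcardA : #A = #S := by simp [A]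
  obtain ⟨j, hj⟩ : (S \ A).Nonempty :=
    sdiff_nonempty.2 fun h => hne (eq_of_subset_of_card_le h hcardA.le)
  have hlarge : ∀ j ∈ S \ A, #S < j ∧ j ≤ K := by
    intro j hj
    obtain ⟨hjS, hjA⟩ := mem_sdiff.1 hj
    have hjK := mem_Icc.1 (hS hjS)
    simp only [A, mem_Icc, not_and, not_le] at hjA
    exact ⟨hjA hjK.1, hjK.2⟩
  have hm : #S ∈ Set.Icc 1 K :=
    ⟨card_pos.2 ⟨j, (mem_sdiff.1 hj).1⟩, (hlarge j hj).1.le.trans (hlarge j hj).2⟩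
  calc ∑ i ∈ S, γ i = ∑ i ∈ A ∩ S, γ i + ∑ i ∈ S \ A, γ i := by
        rw [inter_comm, sum_inter_add_sum_sdiff]
    _ < ∑ i ∈ A ∩ S, γ i + #(A \ S) • γ #S := by
        rw [card_sdiff_comm hcardA, ← sum_const]
        gcongr with i hi
        · exact ⟨j, hj⟩
        · obtain ⟨hmi, hiK⟩ := hlarge i hi
          exact hγ hm ⟨hm.1.trans hmi.le, hiK⟩ hmi
    _ ≤ ∑ i ∈ A ∩ S, γ i + ∑ i ∈ A \ S, γ i := by
        gcongr
        refine card_nsmul_le_sum _ _ _ fun i hi => ?_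
        have hi := mem_Icc.1 (mem_sdiff.1 hi).1
        exact hγ.antitoneOn ⟨hi.1, hi.2.trans hm.2⟩ hm hi.2
    _ = ∑ i ∈ A, γ i := sum_inter_add_sum_sdiff _ _ _

variable {lam η : ℝ} {S : Finset ℕ}

lemma eq_Icc_card_of_forall_ell_le (hγ : StrictAntiOn γ (Set.Icc 1 K)) (hη : 0 < η)
    (hS : S ⊆ Icc 1 K) (hmin : ∀ T ⊆ Icc 1 K, ell γ lam η S ≤ ell γ lam η T) :
    S = Icc 1 #S := by
  by_contra hne
  have hle := hmin _ (Icc_subset_Icc le_rfl (by simpa using card_le_card hS))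
  have hlt := mul_lt_mul_of_pos_left (sum_lt_sum_Icc_card hγ hS hne) hη
  simp only [ell, Nat.card_Icc, add_tsub_cancel_right] at hle
  linarith

lemma eq_Icc_card_of_forall_ell_le_of_card_le (hγ : StrictAntiOn γ (Set.Icc 1 K)) (hlam : 0 ≤ lam)
    (hη : 0 ≤ η) (hS : S ⊆ Icc 1 K)
    (hmin : ∀ T ⊆ Icc 1 K, ell γ lam η S ≤ ell γ lam η T)
    (hcard : ∀ T ⊆ Icc 1 K, (∀ U ⊆ Icc 1 K, ell γ lam η T ≤ ell γ lam η U) → #S ≤ #T) :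
    S = Icc 1 #S := by
  rcases hη.eq_or_lt with rfl | hη
  · have hempty : ∀ U ⊆ Icc 1 K, ell γ lam 0 ∅ ≤ ell γ lam 0 U := fun U _ => by
      simp only [ell, card_empty, zero_mul, sub_zero, Nat.not_lt_zero, if_false,
        CharP.cast_eq_zero, mul_zero, add_zero]
      positivity
    obtain rfl : S = ∅ := by simpa using hcard ∅ (empty_subset _) hempty
    simp
  · exact eq_Icc_card_of_forall_ell_le hγ hη hS hmin

end Prefix

lemma sum_lt_sum_of_ell_lt_of_ell_le {γ : ℕ → ℝ} {lam η₁ η₂ : ℝ} {S T : Finset ℕ}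
    (hη : η₁ < η₂) (h₁ : ell γ lam η₁ S < ell γ lam η₁ T)
    (h₂ : ell γ lam η₂ T ≤ ell γ lam η₂ S) :
    ∑ i ∈ S, γ i < ∑ i ∈ T, γ i := by
  simp only [ell] at h₁ h₂
  nlinarith

theorem stmt2_general (K : ℕ) (γ : ℕ → ℝ) (lam : ℝ) (hlam : 0 ≤ lam)
    (hstrict : ∀ i : ℕ, 1 ≤ i → i < K → γ (i + 1) < γ i)
    (hposK : 0 < γ K)
    (η₁ η₂ : ℝ) (hη₁ : 0 ≤ η₁) (hη₁₂ : η₁ < η₂)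
    (S₁ S₂ : Finset ℕ) (hS₁ : S₁ ⊆ Finset.Icc 1 K) (hS₂ : S₂ ⊆ Finset.Icc 1 K)
    (hmin₁ : ∀ T ⊆ Finset.Icc 1 K, ell γ lam η₁ S₁ ≤ ell γ lam η₁ T)
    (hmin₂ : ∀ T ⊆ Finset.Icc 1 K, ell γ lam η₂ S₂ ≤ ell γ lam η₂ T)
    (hcard₁ : ∀ T ⊆ Finset.Icc 1 K,
      (∀ U ⊆ Finset.Icc 1 K, ell γ lam η₁ T ≤ ell γ lam η₁ U) → S₁.card ≤ T.card) :
    S₁ ⊆ S₂ := by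
  have hγ : StrictAntiOn γ (Set.Icc 1 K) :=
    strictAntiOn_of_succ_lt Set.ordConnected_Icc fun i _ hi hi' => hstrict i hi.1 hi'.2
  have hγ₀ : ∀ i ∈ Icc 1 K, 0 ≤ γ i := fun i hi =>
    have hi := mem_Icc.1 hi
    hposK.le.trans (hγ.antitoneOn hi ⟨hi.1.trans hi.2, le_rfl⟩ hi.2)
  have hp₁ := eq_Icc_card_of_forall_ell_le_of_card_le hγ hlam hη₁ hS₁ hmin₁ hcard₁
  have hp₂ := eq_Icc_card_of_forall_ell_le hγ (hη₁.trans_lt hη₁₂) hS₂ hmin₂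
  suffices #S₁ ≤ #S₂ by rw [hp₁, hp₂]; exact Icc_subset_Icc le_rfl this
  by_contra! hlt
  have hsub : S₂ ⊆ S₁ := by rw [hp₁, hp₂]; exact Icc_subset_Icc le_rfl hlt.le
  obtain ⟨U, hU, hU₂⟩ : ∃ U ⊆ Icc 1 K, ell γ lam η₁ U < ell γ lam η₁ S₂ := by
    by_contra! h
    exact (hcard₁ S₂ hS₂ h).not_gt hlt
  have hsum := sum_lt_sum_of_ell_lt_of_ell_le hη₁₂ ((hmin₁ U hU).trans_lt hU₂) (hmin₂ S₁ hS₁)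
  exact hsum.not_ge (sum_le_sum_of_subset_of_nonneg hsub fun i hi _ => hγ₀ i (hS₁ hi))

/-- Nested sets: with strictly decreasing γ, minimal-cardinality minimizers at η₁ < η₂
are nested: S₁ ⊆ S₂. -/
theorem stmt2 (K : ℕ) (hK : 1 ≤ K) (γ : ℕ → ℝ) (lam : ℝ) (hlam : 0 ≤ lam)
    (hmono : ∀ i j : ℕ, 1 ≤ i → i ≤ j → j ≤ K → γ j ≤ γ i)
    (hstrict : ∀ i : ℕ, 1 ≤ i → i < K → γ (i + 1) < γ i)
    (hposK : 0 < γ K)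
    (hsum : ∑ i ∈ Finset.Icc 1 K, γ i = 1)
    (η₁ η₂ : ℝ) (hη₁ : 0 ≤ η₁) (hη₁₂ : η₁ < η₂)
    (S₁ S₂ : Finset ℕ) (hS₁ : S₁ ⊆ Finset.Icc 1 K) (hS₂ : S₂ ⊆ Finset.Icc 1 K)
    (hmin₁ : ∀ T ⊆ Finset.Icc 1 K, ell γ lam η₁ S₁ ≤ ell γ lam η₁ T)
    (hmin₂ : ∀ T ⊆ Finset.Icc 1 K, ell γ lam η₂ S₂ ≤ ell γ lam η₂ T)
    (hcard₁ : ∀ T ⊆ Finset.Icc 1 K,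
      (∀ U ⊆ Finset.Icc 1 K, ell γ lam η₁ T ≤ ell γ lam η₁ U) → S₁.card ≤ T.card)
    (hcard₂ : ∀ T ⊆ Finset.Icc 1 K,
      (∀ U ⊆ Finset.Icc 1 K, ell γ lam η₂ T ≤ ell γ lam η₂ U) → S₂.card ≤ T.card) :
    S₁ ⊆ S₂ :=
  stmt2_general K γ lam hlam hstrict hposK η₁ η₂ hη₁ hη₁₂ S₁ S₂ hS₁ hS₂ hmin₁ hmin₂ hcard₁
end

section
/- Under the hull hypotheses, the optimal index function is the step function determined by the hull slopes: κ(η) = 0 for all η ∈ [0, η_1]; for each i ∈ {1,…,m−1}, κ(η) = v_i for all η ∈ (η_i, η_{i+1}]; and κ(η) = K for all η > η_m. -/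
open Finset

theorem kappa_eq_of_hull (K : ℕ) (γ : ℕ → ℝ) (lam : ℝ)
    (hmono : ∀ i j : ℕ, 1 ≤ i → i ≤ j → j ≤ K → γ j ≤ γ i)
    (hposK : 0 < γ K)
    (v : ℕ → ℕ) (m : ℕ) (hv0 : v 0 = 0) (hvm : v m = K)
    (hvmono : ∀ i, i < m → v i < v (i + 1))
    (hetamono : ∀ i, 1 ≤ i → i < m → etaSlope γ lam v i < etaSlope γ lam v (i + 1))
    (hhull : ∀ i, 1 ≤ i → i ≤ m → ∀ k, v (i - 1) < k → k < v i →
      gfun lam (v (i - 1)) + etaSlope γ lam v i * (Gam γ k - Gam γ (v (i - 1))) < gfun lam k)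
    (i : ℕ) (hi : i ≤ m) (η : ℝ)
    (hlow : 1 ≤ i → etaSlope γ lam v i < η)
    (hhigh : i < m → η ≤ etaSlope γ lam v (i + 1)) :
    kappa γ lam K η = v i := by
  have hγpos : ∀ k, 1 ≤ k → k ≤ K → 0 < γ k := fun k h1 h2 =>
    lt_of_lt_of_le hposK (hmono k K h1 h2 le_rfl)
  have hvlt : ∀ b, b ≤ m → ∀ a, a < b → v a < v b := by
    intro b
    induction b with
    | zero => intro _ a ha; omega
    | succ n ih =>
      intro hbm a hab
      have h1 : v n < v (n + 1) := hvmono n (by omega)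
      rcases Nat.lt_succ_iff_lt_or_eq.mp hab with h | h
      · exact lt_trans (ih (by omega) a h) h1
      · subst h; exact h1
  have hvle : ∀ a b, a ≤ b → b ≤ m → v a ≤ v b := by
    intro a b hab hbm
    rcases eq_or_lt_of_le hab with h | h
    · subst h; exact le_rfl
    · exact (hvlt b hbm a h).le
  have hvK : ∀ j, j ≤ m → v j ≤ K := fun j hj => hvm ▸ hvle j m hj le_rfl
  have hGamsum : ∀ a b : ℕ, a ≤ b → Gam γ b = Gam γ a + ∑ x ∈ Finset.Ioc a b, γ x := by
    intro a b hab
    have h0 : ∀ c : ℕ, Gam γ c = ∑ x ∈ Finset.Ioc 0 c, γ x := by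
      intro c; unfold Gam; rw [← Finset.Icc_add_one_left_eq_Ioc]; rfl
    rw [h0 a, h0 b, ← Finset.sum_Ioc_consecutive _ (Nat.zero_le a) hab]
  have hGamlt : ∀ a b : ℕ, a < b → b ≤ K → Gam γ a < Gam γ b := by
    intro a b hab hbK
    rw [hGamsum a b hab.le]
    have hpos : 0 < ∑ x ∈ Finset.Ioc a b, γ x := by
      apply Finset.sum_pos
      · intro x hx
        rw [Finset.mem_Ioc] at hx
        exact hγpos x (by omega) (le_trans hx.2 hbK)
      · exact ⟨b, Finset.mem_Ioc.mpr ⟨hab, le_rfl⟩⟩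
    linarith
  have hslope : ∀ j, 1 ≤ j → j ≤ m →
      gfun lam (v j) - gfun lam (v (j - 1)) =
        etaSlope γ lam v j * (Gam γ (v j) - Gam γ (v (j - 1))) := by
    intro j h1 hjm
    have hd : 0 < Gam γ (v j) - Gam γ (v (j - 1)) :=
      sub_pos.mpr (hGamlt _ _ (hvlt j hjm (j - 1) (by omega)) (hvK j hjm))
    rw [etaSlope, div_mul_cancel₀ _ hd.ne']
  have vstep : ∀ j, 1 ≤ j → j ≤ m →
      Psi γ lam η (v j) - Psi γ lam η (v (j - 1)) =
        (etaSlope γ lam v j - η) * (Gam γ (v j) - Gam γ (v (j - 1))) := by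
    intro j h1 hjm
    have hid := hslope j h1 hjm
    simp only [Psi]
    linear_combination hid
  have etachain : ∀ b, b ≤ m → ∀ a, 1 ≤ a → a ≤ b →
      etaSlope γ lam v a ≤ etaSlope γ lam v b := by
    intro b
    induction b with
    | zero => intro _ a h1 h2; omega
    | succ n ih =>
      intro hbm a h1 hab
      rcases eq_or_lt_of_le hab with h | h
      · subst h; exact le_rfl
      · have han : a ≤ n := by omega
        exact le_trans (ih (by omega) a h1 han) (hetamono n (by omega) (by omega)).le
  -- vertex chain, downward (strict)
  have chainAd : ∀ d, d ≤ i → Psi γ lam η (v i) ≤ Psi γ lam η (v (i - d)) ∧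
      (0 < d → Psi γ lam η (v i) < Psi γ lam η (v (i - d))) := by
    intro d
    induction d with
    | zero => intro _; exact ⟨by simp, by omega⟩
    | succ n ih =>
      intro hd
      have ihn := ih (by omega)
      have hj1 : 1 ≤ i - n := by omega
      have hji : i - n ≤ i := by omega
      have hjm : i - n ≤ m := le_trans hji hi
      have hηj : etaSlope γ lam v (i - n) < η :=
        lt_of_le_of_lt (etachain i hi (i - n) hj1 hji) (hlow (le_trans hj1 hji))
      have hdp : 0 < Gam γ (v (i - n)) - Gam γ (v (i - n - 1)) :=
        sub_pos.mpr (hGamlt _ _ (hvlt _ hjm _ (by omega)) (hvK _ hjm))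
      have hstep := vstep (i - n) hj1 hjm
      have hlt : Psi γ lam η (v (i - n)) < Psi γ lam η (v (i - n - 1)) := by
        nlinarith [mul_neg_of_neg_of_pos (sub_neg.mpr hηj) hdp]
      have heq : i - (n + 1) = i - n - 1 := by omega
      rw [heq]
      exact ⟨le_of_lt (lt_of_le_of_lt ihn.1 hlt), fun _ => lt_of_le_of_lt ihn.1 hlt⟩
  have chainA' : ∀ j, j < i → Psi γ lam η (v i) < Psi γ lam η (v j) := by
    intro j hj
    have h := (chainAd (i - j) (by omega)).2 (by omega)
    rwa [show i - (i - j) = j by omega] at h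
  have chainA'' : ∀ j, j ≤ i → Psi γ lam η (v i) ≤ Psi γ lam η (v j) := by
    intro j hj
    have h := (chainAd (i - j) (by omega)).1
    rwa [show i - (i - j) = j by omega] at h
  -- vertex chain, upward
  have chainBd : ∀ d, i + d ≤ m → Psi γ lam η (v i) ≤ Psi γ lam η (v (i + d)) := by
    intro d
    induction d with
    | zero => intro _; simp
    | succ n ih =>
      intro hd
      have hjm : i + n + 1 ≤ m := by omega
      have ihn := ih (by omega)
      have him : i < m := by omega
      have hηj : η ≤ etaSlope γ lam v (i + n + 1) :=
        le_trans (hhigh him) (etachain (i + n + 1) hjm (i + 1) (by omega) (by omega))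
      have hdp : 0 < Gam γ (v (i + n + 1)) - Gam γ (v (i + n + 1 - 1)) :=
        sub_pos.mpr (hGamlt _ _ (hvlt _ hjm _ (by omega)) (hvK _ hjm))
      have hstep := vstep (i + n + 1) (by omega) hjm
      have h2 : i + n + 1 - 1 = i + n := by omega
      rw [h2] at hstep hdp
      have hle : Psi γ lam η (v (i + n)) ≤ Psi γ lam η (v (i + n + 1)) := by
        nlinarith [mul_nonneg (sub_nonneg.mpr hηj) hdp.le]
      have heq : i + (n + 1) = i + n + 1 := by omega
      rw [heq]
      exact le_trans ihn hle
  have chainB' : ∀ j, i ≤ j → j ≤ m → Psi γ lam η (v i) ≤ Psi γ lam η (v j) := by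
    intro j h1 h2
    have h := chainBd (j - i) (by omega)
    rwa [show i + (j - i) = j by omega] at h
  -- non-vertex points
  have hnv : ∀ j, 1 ≤ j → j ≤ m → ∀ k, v (j - 1) < k → k < v j →
      Psi γ lam η (v i) < Psi γ lam η k := by
    intro j h1 hjm k hk1 hk2
    have hhk := hhull j h1 hjm k hk1 hk2
    have hid := hslope j h1 hjm
    have hΓ1 : Gam γ (v (j - 1)) < Gam γ k := hGamlt _ _ hk1 (le_trans hk2.le (hvK j hjm))
    have hΓ2 : Gam γ k < Gam γ (v j) := hGamlt _ _ hk2 (hvK j hjm)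
    rcases le_or_gt j i with hji | hij
    · have hηj : etaSlope γ lam v j < η :=
        lt_of_le_of_lt (etachain i hi j h1 hji) (hlow (le_trans h1 hji))
      have h2 : Psi γ lam η (v j) < Psi γ lam η k := by
        simp only [Psi]
        nlinarith [mul_pos (sub_pos.mpr hηj) (sub_pos.mpr hΓ2)]
      exact lt_of_le_of_lt (chainA'' j hji) h2
    · have him : i < m := lt_of_lt_of_le hij hjm
      have hηj : η ≤ etaSlope γ lam v j :=
        le_trans (hhigh him) (etachain j hjm (i + 1) (by omega) (by omega))
      have h2 : Psi γ lam η (v (j - 1)) < Psi γ lam η k := by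
        simp only [Psi]
        nlinarith [mul_nonneg (sub_nonneg.mpr hηj) (sub_pos.mpr hΓ1).le]
      exact lt_of_le_of_lt (chainB' (j - 1) (by omega) (by omega)) h2
  -- locating an arbitrary k ≤ K
  have locate : ∀ k, k ≤ K → (∃ j, j ≤ m ∧ v j = k) ∨
      (∃ j, 1 ≤ j ∧ j ≤ m ∧ v (j - 1) < k ∧ k < v j) := by
    intro k hk
    by_cases hvtx : ∃ j, j ≤ m ∧ v j = k
    · exact Or.inl hvtx
    · right
      have hmS : m ∈ {j : ℕ | k ≤ v j} := by
        simp only [Set.mem_setOf_eq, hvm]; exact hk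
      have hneS : {j : ℕ | k ≤ v j}.Nonempty := ⟨m, hmS⟩
      set j := sInf {j : ℕ | k ≤ v j} with hj
      have hjS : k ≤ v j := Nat.sInf_mem hneS
      have hjm : j ≤ m := Nat.sInf_le hmS
      have hne : v j ≠ k := fun h => hvtx ⟨j, hjm, h⟩
      have hkj : k < v j := lt_of_le_of_ne hjS (Ne.symm hne)
      have hj1 : 1 ≤ j := by
        rcases Nat.eq_zero_or_pos j with h0 | h0
        · exfalso; rw [h0, hv0] at hkj; omega
        · exact h0
      have hlt2 : v (j - 1) < k := by
        by_contra h
        push_neg at h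
        have hm2 : j - 1 ∈ {j : ℕ | k ≤ v j} := h
        have := Nat.sInf_le hm2
        omega
      exact ⟨j, hj1, hjm, hlt2, hkj⟩
  have main_le : ∀ k, k ≤ K → Psi γ lam η (v i) ≤ Psi γ lam η k := by
    intro k hk
    rcases locate k hk with ⟨j, hjm, hvj⟩ | ⟨j, h1, hjm, hk1, hk2⟩
    · subst hvj
      rcases le_or_gt i j with h | h
      · exact chainB' j h hjm
      · exact (chainA' j h).le
    · exact (hnv j h1 hjm k hk1 hk2).le
  have main_lt : ∀ k, k < v i → Psi γ lam η (v i) < Psi γ lam η k := by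
    intro k hk
    have hkK : k ≤ K := le_trans hk.le (hvK i hi)
    rcases locate k hkK with ⟨j, hjm, hvj⟩ | ⟨j, h1, hjm, hk1, hk2⟩
    · have hji : j < i := by
        by_contra h
        push_neg at h
        have := hvle i j h hjm
        omega
      rw [← hvj]
      exact chainA' j hji
    · exact hnv j h1 hjm k hk1 hk2
  have hmem : v i ∈ {k : ℕ | k ≤ K ∧ ∀ j ≤ K, Psi γ lam η k ≤ Psi γ lam η j} :=
    ⟨hvK i hi, fun j hj => main_le j hj⟩
  unfold kappa
  refine le_antisymm (Nat.sInf_le hmem) ?_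
  have hmem2 := Nat.sInf_mem (⟨v i, hmem⟩ :
    {k : ℕ | k ≤ K ∧ ∀ j ≤ K, Psi γ lam η k ≤ Psi γ lam η j}.Nonempty)
  by_contra h
  push_neg at h
  have h1 := hmem2.2 (v i) (hvK i hi)
  have h2 := main_lt _ h
  linarith

/-- Under the hull hypotheses, the optimal index function is the step function
determined by the hull slopes. -/
theorem stmt10 (K : ℕ) (hK : 1 ≤ K) (γ : ℕ → ℝ) (lam : ℝ) (hlam : 0 ≤ lam)
    (hmono : ∀ i j : ℕ, 1 ≤ i → i ≤ j → j ≤ K → γ j ≤ γ i)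
    (hposK : 0 < γ K)
    (hsum : ∑ i ∈ Finset.Icc 1 K, γ i = 1)
    (v : ℕ → ℕ) (m : ℕ) (hv0 : v 0 = 0) (hvm : v m = K)
    (hvmono : ∀ i, i < m → v i < v (i + 1))
    (heta1 : 0 < etaSlope γ lam v 1)
    (hetamono : ∀ i, 1 ≤ i → i < m → etaSlope γ lam v i < etaSlope γ lam v (i + 1))
    (hhull : ∀ i, 1 ≤ i → i ≤ m → ∀ k, v (i - 1) < k → k < v i →
      gfun lam (v (i - 1)) + etaSlope γ lam v i * (Gam γ k - Gam γ (v (i - 1))) < gfun lam k) :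
    (∀ η : ℝ, 0 ≤ η → η ≤ etaSlope γ lam v 1 → kappa γ lam K η = 0) ∧
    (∀ i, 1 ≤ i → i < m → ∀ η : ℝ,
      etaSlope γ lam v i < η → η ≤ etaSlope γ lam v (i + 1) → kappa γ lam K η = v i) ∧
    (∀ η : ℝ, etaSlope γ lam v m < η → kappa γ lam K η = K) := by
  refine ⟨?_, ?_, ?_⟩
  · intro η h0 h1
    have h := kappa_eq_of_hull K γ lam hmono hposK v m hv0 hvm hvmono hetamono hhull
      0 (Nat.zero_le m) η (fun hc => by omega) (fun _ => by simpa using h1)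
    rwa [hv0] at h
  · intro i h1 h2 η hl hh
    exact kappa_eq_of_hull K γ lam hmono hposK v m hv0 hvm hvmono hetamono hhull
      i (le_of_lt h2) η (fun _ => hl) (fun _ => hh)
  · intro η hl
    have h := kappa_eq_of_hull K γ lam hmono hposK v m hv0 hvm hvmono hetamono hhull
      m le_rfl η (fun _ => hl) (fun hc => absurd hc (lt_irrefl m))
    rwa [hvm] at h
end

section
/- Under the hull hypotheses, the range of the optimal index function over η ∈ [0,∞) is exactly the set of hull vertex indices: {κ(η) : η ≥ 0} = {v_0, v_1, …, v_m}. -/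
open Finset

/-!
Along the hull, `Ψ_η (v j) - Ψ_η (v (j-1)) = (η_j - η) (Γ (v j) - Γ (v (j-1)))`, so for
`η ∈ (η_i, η_{i+1}]` the values of `Ψ_η` at the vertices strictly decrease up to `v i` and
weakly increase after it. A point strictly inside the `j`-th hull segment lies strictly above
that segment, and `Ψ_η` is affine along the segment, so its value exceeds the smaller of the
two endpoint values. Hence `v i` is the smallest minimiser, i.e. `κ(η) = v i`. Every `η` lies
in one of these windows, and every window contains some `η ≥ 0` because the slopes are positive.
-/

lemma Gam_succ (γ : ℕ → ℝ) (k : ℕ) : Gam γ (k + 1) = Gam γ k + γ (k + 1) :=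
  Finset.sum_Icc_succ_top (by omega) γ

lemma Gam_strictMonoOn {γ : ℕ → ℝ} {K : ℕ} (hγ : ∀ k, 1 ≤ k → k ≤ K → 0 < γ k) :
    StrictMonoOn (Gam γ) (Set.Iic K) :=
  strictMonoOn_of_lt_add_one Set.ordConnected_Iic fun k _ _ hk => by
    rw [Gam_succ]
    linarith [hγ (k + 1) (by omega) hk]

lemma kappa_eq_of_Psi_le_of_Psi_lt {γ : ℕ → ℝ} {lam η : ℝ} {K c : ℕ} (hcK : c ≤ K)
    (hle : ∀ k ≤ K, Psi γ lam η c ≤ Psi γ lam η k)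
    (hlt : ∀ k < c, Psi γ lam η c < Psi γ lam η k) :
    kappa γ lam K η = c := by
  have hmem : c ∈ {k | k ≤ K ∧ ∀ j ≤ K, Psi γ lam η k ≤ Psi γ lam η j} := ⟨hcK, hle⟩
  refine le_antisymm (Nat.sInf_le hmem) (le_csInf ⟨c, hmem⟩ fun k hk => ?_)
  by_contra! hkc
  exact (hlt k hkc).not_ge (hk.2 c hcK)

lemma exists_eq_or_mem_Ioo_of_strictMonoOn {v : ℕ → ℕ} {m k : ℕ}
    (hv : StrictMonoOn v (Set.Iic m)) (h0 : v 0 ≤ k) (hk : k ≤ v m) :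
    (∃ j ≤ m, v j = k) ∨ ∃ j < m, v j < k ∧ k < v (j + 1) := by
  induction m with
  | zero => exact Or.inl ⟨0, le_rfl, le_antisymm h0 hk⟩
  | succ m ih =>
    by_cases hkm : k ≤ v m
    · rcases ih (hv.mono (Set.Iic_subset_Iic.2 m.le_succ)) hkm with ⟨j, hj, rfl⟩ | ⟨j, hj, hjk⟩
      · exact Or.inl ⟨j, by omega, rfl⟩
      · exact Or.inr ⟨j, by omega, hjk⟩
    · rcases hk.eq_or_lt with rfl | hk
      · exact Or.inl ⟨m + 1, le_rfl, rfl⟩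
      · exact Or.inr ⟨m, m.lt_succ_self, by omega, hk⟩

/-- `η` lies in the `i`-th window `(s i, s (i + 1)]` of the slopes `s 1 < ⋯ < s m`, where the
first window is unbounded below and the last one unbounded above. -/
def InSlopeWindow (s : ℕ → ℝ) (m i : ℕ) (η : ℝ) : Prop :=
  (0 < i → s i < η) ∧ (i < m → η ≤ s (i + 1))

lemma exists_inSlopeWindow (s : ℕ → ℝ) (m : ℕ) (η : ℝ) : ∃ i ≤ m, InSlopeWindow s m i η := by
  induction m with
  | zero => exact ⟨0, le_rfl, by simp, by simp⟩
  | succ m ih =>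
    by_cases hη : s (m + 1) < η
    · exact ⟨m + 1, le_rfl, fun _ => hη, by simp⟩
    · obtain ⟨i, him, hlo, hhi⟩ := ih
      refine ⟨i, by omega, hlo, fun hi => ?_⟩
      rcases him.lt_or_eq with him | rfl
      · exact hhi him
      · exact le_of_not_gt hη

lemma exists_nonneg_inSlopeWindow {s : ℕ → ℝ} {m i : ℕ} (h1 : 0 < s 1)
    (hs : StrictMonoOn s (Set.Icc 1 m)) (him : i ≤ m) :
    ∃ η, 0 ≤ η ∧ InSlopeWindow s m i η := by
  rcases him.lt_or_eq with him | rfl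
  · have hs1 : s 1 ≤ s (i + 1) := hs.monotoneOn ⟨le_rfl, by omega⟩ ⟨by omega, him⟩ (by omega)
    exact ⟨s (i + 1), by linarith, fun hi => hs ⟨hi, him.le⟩ ⟨by omega, him⟩ (by omega),
      fun _ => le_rfl⟩
  · exact ⟨|s i| + 1, by positivity, fun _ => by linarith [le_abs_self (s i)], by simp⟩

section Hull

variable {γ : ℕ → ℝ} {lam η : ℝ} {v : ℕ → ℕ} {m : ℕ}

lemma Psi_succ_sub_Psi (j : ℕ) (hG : Gam γ (v j) ≠ Gam γ (v (j + 1))) :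
    Psi γ lam η (v (j + 1)) - Psi γ lam η (v j)
      = (etaSlope γ lam v (j + 1) - η) * (Gam γ (v (j + 1)) - Gam γ (v j)) := by
  simp only [Psi, etaSlope, Nat.add_sub_cancel]
  rw [sub_mul, div_mul_cancel₀ _ (sub_ne_zero.2 hG.symm)]
  ring

lemma min_Psi_lt_Psi_of_lt_gfun {j k : ℕ} (hlo : Gam γ (v j) < Gam γ k)
    (hhi : Gam γ k < Gam γ (v (j + 1)))
    (hk : gfun lam (v j) + etaSlope γ lam v (j + 1) * (Gam γ k - Gam γ (v j)) < gfun lam k) :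
    min (Psi γ lam η (v j)) (Psi γ lam η (v (j + 1))) < Psi γ lam η k := by
  have hstep := Psi_succ_sub_Psi (lam := lam) (η := η) j (hlo.trans hhi).ne
  simp only [Psi] at hstep ⊢
  rcases le_or_gt η (etaSlope γ lam v (j + 1)) with hη | hη
  · refine (min_le_left _ _).trans_lt ?_
    nlinarith [mul_nonneg (sub_nonneg.2 hη) (sub_nonneg.2 hlo.le)]
  · refine (min_le_right _ _).trans_lt ?_
    nlinarith [mul_pos (sub_pos.2 hη) (sub_pos.2 hhi)]

lemma Psi_vertex_strictAntiOn (hGv : ∀ j < m, Gam γ (v j) < Gam γ (v (j + 1)))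
    (hs : MonotoneOn (etaSlope γ lam v) (Set.Icc 1 m)) {i : ℕ} (him : i ≤ m)
    (hlo : 0 < i → etaSlope γ lam v i < η) :
    StrictAntiOn (fun j => Psi γ lam η (v j)) (Set.Iic i) :=
  strictAntiOn_of_add_one_lt Set.ordConnected_Iic fun j _ _ (hj : j + 1 ≤ i) => by
    have hslope : etaSlope γ lam v (j + 1) < η :=
      (hs ⟨by omega, by omega⟩ ⟨by omega, him⟩ hj).trans_lt (hlo (by omega))
    have hstep := Psi_succ_sub_Psi (lam := lam) (η := η) j (hGv j (by omega)).ne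
    nlinarith [mul_pos (sub_pos.2 hslope) (sub_pos.2 (hGv j (by omega)))]

lemma Psi_vertex_monotoneOn (hGv : ∀ j < m, Gam γ (v j) < Gam γ (v (j + 1)))
    (hs : MonotoneOn (etaSlope γ lam v) (Set.Icc 1 m)) {i : ℕ}
    (hhi : i < m → η ≤ etaSlope γ lam v (i + 1)) :
    MonotoneOn (fun j => Psi γ lam η (v j)) (Set.Icc i m) :=
  monotoneOn_of_le_add_one Set.ordConnected_Icc fun j _ (hj : i ≤ j ∧ j ≤ m)
      (hj1 : i ≤ j + 1 ∧ j + 1 ≤ m) => by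
    have hslope : η ≤ etaSlope γ lam v (j + 1) :=
      (hhi (by omega)).trans (hs ⟨by omega, by omega⟩ ⟨by omega, hj1.2⟩ (by omega))
    have hstep := Psi_succ_sub_Psi (lam := lam) (η := η) j (hGv j (by omega)).ne
    nlinarith [mul_nonneg (sub_nonneg.2 hslope) (sub_pos.2 (hGv j (by omega))).le]

theorem kappa_eq_of_inSlopeWindow {K i : ℕ} (hG : StrictMonoOn (Gam γ) (Set.Iic K))
    (hv : StrictMonoOn v (Set.Iic m)) (hv0 : v 0 = 0) (hvm : v m = K)
    (hs : MonotoneOn (etaSlope γ lam v) (Set.Icc 1 m))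
    (hhull : ∀ j < m, ∀ k, v j < k → k < v (j + 1) →
      gfun lam (v j) + etaSlope γ lam v (j + 1) * (Gam γ k - Gam γ (v j)) < gfun lam k)
    (him : i ≤ m) (hη : InSlopeWindow (etaSlope γ lam v) m i η) :
    kappa γ lam K η = v i := by
  have hvK : ∀ j ≤ m, v j ≤ K := fun j hj => hvm ▸ hv.monotoneOn hj Set.self_mem_Iic hj
  have hGv : ∀ j < m, Gam γ (v j) < Gam γ (v (j + 1)) := fun j hj =>
    hG (hvK j hj.le) (hvK (j + 1) hj) (hv hj.le hj j.lt_succ_self)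
  have hvertex : ∀ j ≤ m, Psi γ lam η (v i) ≤ Psi γ lam η (v j) ∧
      (v j < v i → Psi γ lam η (v i) < Psi γ lam η (v j)) := by
    intro j hj
    rcases lt_or_ge j i with hji | hij
    · have := Psi_vertex_strictAntiOn hGv hs him hη.1 hji.le Set.self_mem_Iic hji
      exact ⟨this.le, fun _ => this⟩
    · refine ⟨Psi_vertex_monotoneOn hGv hs hη.2 ⟨le_rfl, him⟩ ⟨hij, hj⟩ hij, fun hji => ?_⟩
      exact absurd (hv.monotoneOn him hj hij) hji.not_ge
  have hall : ∀ k ≤ K, Psi γ lam η (v i) ≤ Psi γ lam η k ∧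
      (k < v i → Psi γ lam η (v i) < Psi γ lam η k) := by
    intro k hk
    rcases exists_eq_or_mem_Ioo_of_strictMonoOn hv (hv0 ▸ k.zero_le) (hvm ▸ hk) with
      ⟨j, hj, rfl⟩ | ⟨j, hj, hjk, hkj⟩
    · exact hvertex j hj
    · have hmin := min_Psi_lt_Psi_of_lt_gfun (η := η)
        (hG (hvK j hj.le) hk hjk) (hG hk (hvK (j + 1) hj) hkj) (hhull j hj k hjk hkj)
      have hlt := (le_min (hvertex j hj.le).1 (hvertex (j + 1) hj).1).trans_lt hmin
      exact ⟨hlt.le, fun _ => hlt⟩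
  exact kappa_eq_of_Psi_le_of_Psi_lt (hvK i him) (fun k hk => (hall k hk).1)
    fun k hk => (hall k (hk.le.trans (hvK i him))).2 hk

end Hull

theorem stmt11_general (K : ℕ) (γ : ℕ → ℝ) (lam : ℝ)
    (hmono : ∀ i j : ℕ, 1 ≤ i → i ≤ j → j ≤ K → γ j ≤ γ i)
    (hposK : 0 < γ K)
    (v : ℕ → ℕ) (m : ℕ) (hv0 : v 0 = 0) (hvm : v m = K)
    (hvmono : ∀ i, i < m → v i < v (i + 1))
    (heta1 : 0 < etaSlope γ lam v 1)
    (hetamono : ∀ i, 1 ≤ i → i < m → etaSlope γ lam v i < etaSlope γ lam v (i + 1))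
    (hhull : ∀ i, 1 ≤ i → i ≤ m → ∀ k, v (i - 1) < k → k < v i →
      gfun lam (v (i - 1)) + etaSlope γ lam v i * (Gam γ k - Gam γ (v (i - 1))) < gfun lam k) :
    {k : ℕ | ∃ η : ℝ, 0 ≤ η ∧ kappa γ lam K η = k} = {k : ℕ | ∃ i ≤ m, v i = k} := by
  have hG := Gam_strictMonoOn fun k hk hkK => hposK.trans_le (hmono k K hk hkK le_rfl)
  have hv : StrictMonoOn v (Set.Iic m) :=
    strictMonoOn_of_lt_add_one Set.ordConnected_Iic fun j _ _ hj => hvmono j hj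
  have hs : StrictMonoOn (etaSlope γ lam v) (Set.Icc 1 m) :=
    strictMonoOn_of_lt_add_one Set.ordConnected_Icc fun j _ hj hj1 => hetamono j hj.1 hj1.2
  have hκ : ∀ η, ∀ i ≤ m, InSlopeWindow (etaSlope γ lam v) m i η → kappa γ lam K η = v i :=
    fun η i him hη => kappa_eq_of_inSlopeWindow hG hv hv0 hvm hs.monotoneOn
      (fun j hj k => by simpa using hhull (j + 1) (by omega) hj k) him hη
  ext k
  constructor
  · rintro ⟨η, -, rfl⟩
    obtain ⟨i, him, hη⟩ := exists_inSlopeWindow (etaSlope γ lam v) m η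
    exact ⟨i, him, (hκ η i him hη).symm⟩
  · rintro ⟨i, him, rfl⟩
    obtain ⟨η, hη0, hη⟩ := exists_nonneg_inSlopeWindow heta1 hs him
    exact ⟨η, hη0, hκ η i him hη⟩

/-- Under the hull hypotheses, the range of the optimal index function over η ≥ 0 is
exactly the set of hull vertex indices. -/
theorem stmt11 (K : ℕ) (hK : 1 ≤ K) (γ : ℕ → ℝ) (lam : ℝ) (hlam : 0 ≤ lam)
    (hmono : ∀ i j : ℕ, 1 ≤ i → i ≤ j → j ≤ K → γ j ≤ γ i)
    (hposK : 0 < γ K)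
    (hsum : ∑ i ∈ Finset.Icc 1 K, γ i = 1)
    (v : ℕ → ℕ) (m : ℕ) (hv0 : v 0 = 0) (hvm : v m = K)
    (hvmono : ∀ i, i < m → v i < v (i + 1))
    (heta1 : 0 < etaSlope γ lam v 1)
    (hetamono : ∀ i, 1 ≤ i → i < m → etaSlope γ lam v i < etaSlope γ lam v (i + 1))
    (hhull : ∀ i, 1 ≤ i → i ≤ m → ∀ k, v (i - 1) < k → k < v i →
      gfun lam (v (i - 1)) + etaSlope γ lam v i * (Gam γ k - Gam γ (v (i - 1))) < gfun lam k) :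
    {k : ℕ | ∃ η : ℝ, 0 ≤ η ∧ kappa γ lam K η = k} = {k : ℕ | ∃ i ≤ m, v i = k} :=
  stmt11_general K γ lam hmono hposK v m hv0 hvm hvmono heta1 hetamono hhull
end

section
/- Recovery of the least ambiguous sets score in the limit λ → ∞: for every i ∈ {1,…,K}, the rescaled nonconformity score satisfies lim_{λ→∞} r_λ(i)/λ = 1/γ_i. -/
open Finset

/-
Since the γ's are non-increasing, the labels i, i + 1, … each carry mass at most γ_i and the
labels …, i - 1, i each carry mass at least γ_i. If η γ_i < λ, moving from any k ≥ i down to i - 1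
saves at least λ per removed label in size cost and loses less in weighted mass, so κ_λ(η) < i;
hence λ/γ_i ≤ r_λ(i). If η γ_i ≥ λ + 2, moving from any k < i up to i gains at least λ + 2 per
added label in weighted mass, while the cost grows by at most λ per label plus 1 for the
indicator, so κ_λ(η) ≥ i and r_λ(i) ≤ (λ + 2)/γ_i. Dividing by λ squeezes r_λ(i)/λ to 1/γ_i.
-/

open Filter Topology

lemma kappa_spec (γ : ℕ → ℝ) (lam : ℝ) (K : ℕ) (η : ℝ) :
    kappa γ lam K η ≤ K ∧ ∀ j ≤ K, Psi γ lam η (kappa γ lam K η) ≤ Psi γ lam η j := by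
  obtain ⟨k, hk, hmin⟩ := exists_min_image (range (K + 1)) (Psi γ lam η) nonempty_range_add_one
  exact Nat.sInf_mem (s := {k | k ≤ K ∧ ∀ j ≤ K, Psi γ lam η k ≤ Psi γ lam η j})
    ⟨k, Nat.lt_succ_iff.mp (mem_range.mp hk), fun j hj => hmin j (by simpa [Nat.lt_succ_iff])⟩

lemma Gam_sub_Gam {j k : ℕ} (γ : ℕ → ℝ) (h : j ≤ k) :
    Gam γ k - Gam γ j = ∑ m ∈ Ioc j k, γ m := by
  rw [Gam, Gam, ← zero_add 1, Icc_add_one_left_eq_Ioc, Icc_add_one_left_eq_Ioc]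
  rw [← sum_Ioc_consecutive γ j.zero_le h, add_sub_cancel_left]

lemma sub_mul_le_Gam_sub {j k : ℕ} {γ : ℕ → ℝ} {c : ℝ} (h : j ≤ k)
    (hc : ∀ m ∈ Ioc j k, c ≤ γ m) : ((k : ℝ) - j) * c ≤ Gam γ k - Gam γ j := by
  rw [Gam_sub_Gam γ h, ← Nat.cast_sub h, ← Nat.card_Ioc, ← nsmul_eq_mul]
  exact card_nsmul_le_sum _ _ _ hc

lemma Gam_sub_le_sub_mul {j k : ℕ} {γ : ℕ → ℝ} {c : ℝ} (h : j ≤ k)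
    (hc : ∀ m ∈ Ioc j k, γ m ≤ c) : Gam γ k - Gam γ j ≤ ((k : ℝ) - j) * c := by
  rw [Gam_sub_Gam γ h, ← Nat.cast_sub h, ← Nat.card_Ioc, ← nsmul_eq_mul]
  exact sum_le_card_nsmul _ _ _ hc

lemma gfun_sub_le (lam : ℝ) (j k : ℕ) :
    gfun lam k - gfun lam j ≤ 1 + lam * ((k : ℝ) - j) := by
  unfold gfun
  split_ifs <;> linarith

lemma mul_sub_le_gfun_sub (lam : ℝ) {j k : ℕ} (h : j ≤ k) :
    lam * ((k : ℝ) - j) ≤ gfun lam k - gfun lam j := by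
  unfold gfun
  split_ifs <;> first | omega | linarith

lemma le_kappa_of_add_two_le_mul {K i : ℕ} {γ : ℕ → ℝ} {lam η : ℝ} (hiK : i ≤ K)
    (hγ : ∀ m ∈ Icc 1 i, γ i ≤ γ m) (hη0 : 0 ≤ η) (hη : lam + 2 ≤ η * γ i) :
    i ≤ kappa γ lam K η := by
  obtain ⟨-, hmin⟩ := kappa_spec γ lam K η
  set k := kappa γ lam K η
  by_contra! hki
  have hd : (k : ℝ) + 1 ≤ i := by exact_mod_cast hki
  have hmass := mul_le_mul_of_nonneg_left (sub_mul_le_Gam_sub (c := γ i) hki.le fun m hm =>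
    hγ m (by simp only [mem_Ioc, mem_Icc] at hm ⊢; omega)) hη0
  have hgain := mul_le_mul_of_nonneg_left hη (by linarith : (0 : ℝ) ≤ (i : ℝ) - k)
  have := hmin i hiK
  have := gfun_sub_le lam k i
  unfold Psi at *
  linarith

lemma kappa_le_of_mul_lt {K j : ℕ} {γ : ℕ → ℝ} {lam η : ℝ}
    (hγ : ∀ m ∈ Ioc j K, γ m ≤ γ (j + 1)) (hη0 : 0 ≤ η) (hη : η * γ (j + 1) < lam) :
    kappa γ lam K η ≤ j := by
  obtain ⟨hkK, hmin⟩ := kappa_spec γ lam K η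
  set k := kappa γ lam K η
  by_contra! hjk
  have hd : (j : ℝ) + 1 ≤ k := by exact_mod_cast hjk
  have hmass := mul_le_mul_of_nonneg_left (Gam_sub_le_sub_mul (c := γ (j + 1)) hjk.le
    fun m hm => hγ m (Ioc_subset_Ioc_right hkK hm)) hη0
  have hloss := mul_lt_mul_of_pos_left hη (by linarith : (0 : ℝ) < (k : ℝ) - j)
  have := hmin j (hjk.le.trans hkK)
  have := mul_sub_le_gfun_sub lam hjk.le
  unfold Psi at *
  linarith

section score

variable {K i : ℕ} {γ : ℕ → ℝ} {lam : ℝ}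

lemma mem_score_set (hγ : AntitoneOn γ (Set.Icc 1 K)) (hiK : i ≤ K) (hγi : 0 < γ i)
    (hlam : 0 ≤ lam) : (lam + 2) / γ i ∈ {η : ℝ | 0 ≤ η ∧ i ≤ kappa γ lam K η} := by
  have hγ' : ∀ m ∈ Icc 1 i, γ i ≤ γ m := fun m hm => by
    rw [mem_Icc] at hm
    exact hγ ⟨hm.1, hm.2.trans hiK⟩ ⟨hm.1.trans hm.2, hiK⟩ hm.2
  exact ⟨by positivity,
    le_kappa_of_add_two_le_mul hiK hγ' (by positivity) (div_mul_cancel₀ _ hγi.ne').ge⟩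

lemma score_le (hγ : AntitoneOn γ (Set.Icc 1 K)) (hiK : i ≤ K) (hγi : 0 < γ i)
    (hlam : 0 ≤ lam) : score γ lam K i ≤ (lam + 2) / γ i :=
  csInf_le ⟨0, fun _ hη => hη.1⟩ (mem_score_set hγ hiK hγi hlam)

lemma le_score (hγ : AntitoneOn γ (Set.Icc 1 K)) (hi1 : 1 ≤ i) (hiK : i ≤ K) (hγi : 0 < γ i)
    (hlam : 0 ≤ lam) : lam / γ i ≤ score γ lam K i := by
  refine le_csInf ⟨_, mem_score_set hγ hiK hγi hlam⟩ fun η ⟨hη0, hik⟩ => ?_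
  obtain ⟨j, rfl⟩ := Nat.exists_eq_add_of_le' hi1
  by_contra! hη
  have hγ' : ∀ m ∈ Ioc j K, γ m ≤ γ (j + 1) := fun m hm => by
    rw [mem_Ioc] at hm
    exact hγ ⟨hi1, hiK⟩ ⟨hi1.trans hm.1, hm.2⟩ hm.1
  have := kappa_le_of_mul_lt hγ' hη0 ((lt_div_iff₀ hγi).mp hη)
  omega

end score

theorem stmt13_general (K : ℕ) (γ : ℕ → ℝ)
    (hmono : ∀ i j : ℕ, 1 ≤ i → i ≤ j → j ≤ K → γ j ≤ γ i)
    (hposK : 0 < γ K)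
    (i : ℕ) (hi1 : 1 ≤ i) (hiK : i ≤ K) :
    Filter.Tendsto (fun lam : ℝ => score γ lam K i / lam) Filter.atTop
      (nhds (1 / γ i)) := by
  have hγ : AntitoneOn γ (Set.Icc 1 K) := fun a ha b hb hab => hmono a b ha.1 hab hb.2
  have hγi : 0 < γ i := hposK.trans_le (hγ ⟨hi1, hiK⟩ ⟨hi1.trans hiK, le_rfl⟩ hiK)
  have hupper : Tendsto (fun lam : ℝ => 1 / γ i + 2 / γ i * lam⁻¹) atTop (𝓝 (1 / γ i)) := by
    simpa using tendsto_const_nhds.add (tendsto_inv_atTop_zero.const_mul (2 / γ i))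
  refine tendsto_of_tendsto_of_tendsto_of_le_of_le' tendsto_const_nhds hupper ?_ ?_
  all_goals filter_upwards [eventually_gt_atTop 0] with lam hlam
  · rw [le_div_iff₀ hlam, one_div_mul_eq_div]
    exact le_score hγ hi1 hiK hγi hlam.le
  · calc score γ lam K i / lam ≤ (lam + 2) / γ i / lam := by
          gcongr; exact score_le hγ hiK hγi hlam.le
      _ = 1 / γ i + 2 / γ i * lam⁻¹ := by field_simp

/-- Recovery of the least ambiguous sets score in the limit λ → ∞:
for every i ∈ {1,…,K}, r_λ(i)/λ → 1/γ_i as λ → ∞. -/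
theorem stmt13 (K : ℕ) (hK : 1 ≤ K) (γ : ℕ → ℝ)
    (hmono : ∀ i j : ℕ, 1 ≤ i → i ≤ j → j ≤ K → γ j ≤ γ i)
    (hposK : 0 < γ K)
    (hsum : ∑ i ∈ Finset.Icc 1 K, γ i = 1)
    (i : ℕ) (hi1 : 1 ≤ i) (hiK : i ≤ K) :
    Filter.Tendsto (fun lam : ℝ => score γ lam K i / lam) Filter.atTop
      (nhds (1 / γ i)) :=
  stmt13_general K γ hmono hposK i hi1 hiK
end

section
/- Pure singleton objective (λ = 0), optimal index formula: assume K ≥ 2 and λ = 0. Then κ(0) = 0; κ(η) = 1 for all η ∈ (0, 1/(1 − γ_1)]; and κ(η) = K for all η > 1/(1 − γ_1). (Note 1 − γ_1 > 0 since K ≥ 2 and γ_K > 0.) -/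
open Finset

/-!
With `λ = 0` the objective is `Ψ_η(0) = 0`, `Ψ_η(1) = -η γ₁` and `Ψ_η(k) = 1 - η Γ_k` for `k ≥ 2`.
Among `k ≥ 2` the last index wins, since `Γ_k < Γ_K = 1` for `k < K`; so the competition is between
`0`, `1` and `K`. For `η > 0` index `1` beats `0`, and `K` beats `1` exactly when `η (1 - γ₁) > 1`.
-/

lemma Gam_zero (γ : ℕ → ℝ) : Gam γ 0 = 0 := by
  simp [Gam]

lemma Gam_one (γ : ℕ → ℝ) : Gam γ 1 = γ 1 := by
  simp [Gam]

lemma Gam_lt_Gam {γ : ℕ → ℝ} {a b : ℕ} (hpos : ∀ i ∈ Ioc a b, 0 < γ i) (hab : a < b) :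
    Gam γ a < Gam γ b := by
  have hnew : ∀ j ∈ Icc 1 b, j ∉ Icc 1 a → j ∈ Ioc a b := by
    intro j hjb hja
    simp only [mem_Icc, mem_Ioc] at hjb hja ⊢
    omega
  refine sum_lt_sum_of_subset (Icc_subset_Icc_right hab.le) (i := b)
    (mem_Icc.2 ⟨by omega, le_rfl⟩) (fun h => by have := (mem_Icc.1 h).2; omega)
    (hpos b (mem_Ioc.2 ⟨hab, le_rfl⟩)) fun j hjb hja => (hpos j (hnew j hjb hja)).le

section Psi

variable (γ : ℕ → ℝ) (lam η : ℝ)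

lemma Psi_zero : Psi γ lam η 0 = 0 := by
  simp [Psi, gfun, Gam_zero]

lemma Psi_one : Psi γ lam η 1 = lam - η * γ 1 := by
  simp [Psi, gfun, Gam_one]

lemma Psi_of_one_lt {k : ℕ} (hk : 1 < k) : Psi γ lam η k = 1 + lam * k - η * Gam γ k := by
  simp [Psi, gfun, hk]

end Psi

lemma kappa_eq_of_minimizer {γ : ℕ → ℝ} {lam η : ℝ} {K k : ℕ} (hkK : k ≤ K)
    (hlt : ∀ j < k, Psi γ lam η k < Psi γ lam η j)
    (hle : ∀ j, k < j → j ≤ K → Psi γ lam η k ≤ Psi γ lam η j) :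
    kappa γ lam K η = k := by
  have hmin : ∀ j ≤ K, Psi γ lam η k ≤ Psi γ lam η j := fun j hj => by
    rcases lt_trichotomy j k with hjk | rfl | hkj
    · exact (hlt j hjk).le
    · exact le_rfl
    · exact hle j hkj hj
  refine IsLeast.csInf_eq ⟨⟨hkK, hmin⟩, fun n ⟨_, hn⟩ => not_lt.1 fun hnk => ?_⟩
  exact (hlt n hnk).not_ge (hn k hkK)

section PureSingleton

variable {γ : ℕ → ℝ} {K : ℕ}

lemma kappa_zero_zero : kappa γ 0 K 0 = 0 := by
  refine kappa_eq_of_minimizer (Nat.zero_le K) (by simp) fun j hj _ => ?_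
  rcases Nat.lt_or_ge 1 j with h1j | hj1
  · simp [Psi_zero, Psi_of_one_lt γ 0 0 h1j]
  · obtain rfl : j = 1 := by omega
    simp [Psi_zero, Psi_one]

lemma kappa_zero_eq_one (hK : 1 ≤ K) (hγ1 : 0 < γ 1) (hGam : ∀ j ≤ K, Gam γ j ≤ 1)
    {η : ℝ} (hη : 0 < η) (hηγ : η * (1 - γ 1) ≤ 1) : kappa γ 0 K η = 1 := by
  refine kappa_eq_of_minimizer hK (fun j hj => ?_) fun j h1j hjK => ?_
  · obtain rfl : j = 0 := by omega
    rw [Psi_zero, Psi_one]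
    nlinarith
  · rw [Psi_one, Psi_of_one_lt γ 0 η h1j]
    nlinarith [hGam j hjK]

lemma kappa_zero_eq_top (hK : 2 ≤ K) (hγ1 : 0 ≤ γ 1) (hGam : ∀ j < K, Gam γ j < 1)
    (hGamK : Gam γ K = 1) {η : ℝ} (hηγ : 1 < η * (1 - γ 1)) : kappa γ 0 K η = K := by
  have hγ1_lt : γ 1 < 1 := Gam_one γ ▸ hGam 1 (by omega)
  have hη : 1 < η := by nlinarith
  refine kappa_eq_of_minimizer le_rfl (fun j hjK => ?_) fun j hKj hjK => absurd hjK (by omega)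
  rw [Psi_of_one_lt γ 0 η (by omega : 1 < K), hGamK]
  rcases Nat.lt_or_ge 1 j with h1j | hj1
  · rw [Psi_of_one_lt γ 0 η h1j]
    nlinarith [hGam j hjK]
  · interval_cases j
    · rw [Psi_zero]; linarith
    · rw [Psi_one]; linarith

end PureSingleton

/-- Pure singleton objective (λ = 0), optimal index formula: κ(0) = 0, κ(η) = 1 on
(0, 1/(1 − γ₁)], and κ(η) = K for η > 1/(1 − γ₁). -/
theorem stmt14 (K : ℕ) (hK : 2 ≤ K) (γ : ℕ → ℝ) (lam : ℝ) (hlam : lam = 0)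
    (hmono : ∀ i j : ℕ, 1 ≤ i → i ≤ j → j ≤ K → γ j ≤ γ i)
    (hposK : 0 < γ K)
    (hsum : ∑ i ∈ Finset.Icc 1 K, γ i = 1) :
    kappa γ lam K 0 = 0 ∧
    (∀ η : ℝ, 0 < η → η ≤ 1 / (1 - γ 1) → kappa γ lam K η = 1) ∧
    (∀ η : ℝ, 1 / (1 - γ 1) < η → kappa γ lam K η = K) := by
  subst hlam
  have hpos : ∀ i ∈ Ioc 0 K, 0 < γ i := fun i hi =>
    hposK.trans_le (hmono i K (mem_Ioc.1 hi).1 (mem_Ioc.1 hi).2 le_rfl)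
  have hGam_lt : ∀ j < K, Gam γ j < 1 := fun j hj =>
    hsum ▸ Gam_lt_Gam (fun i hi => hpos i (Ioc_subset_Ioc_left (Nat.zero_le j) hi)) hj
  have hGam_le : ∀ j ≤ K, Gam γ j ≤ 1 := fun j hj =>
    hj.lt_or_eq.elim (fun h => (hGam_lt j h).le) fun h => h ▸ hsum.le
  have hγ1 : 0 < γ 1 := hpos 1 (mem_Ioc.2 ⟨one_pos, by omega⟩)
  have h1γ1 : 0 < 1 - γ 1 := sub_pos.2 (Gam_one γ ▸ hGam_lt 1 (by omega))
  refine ⟨kappa_zero_zero, fun η hη hηle => ?_, fun η hηgt => ?_⟩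
  · exact kappa_zero_eq_one (by omega) hγ1 hGam_le hη ((le_div_iff₀ h1γ1).1 hηle)
  · exact kappa_zero_eq_top hK hγ1.le hGam_lt hsum ((div_lt_iff₀ h1γ1).1 hηgt)
end

section
/- Correctness of the linear-time search for the optimal index on {2,…,K}: assume K ≥ 2 and let η ≥ 0. Define k* = max( {2} ∪ {k ∈ {3,…,K} : η·γ_k > λ} ). Then Ψ_η(k*) ≤ Ψ_η(k) for all k ∈ {2,…,K}; that is, k* minimizes Ψ_η over {2,…,K}. -/
open Finset

/-!
For `k ≥ 2` the increment `Ψ(k+1) - Ψ(k) = λ - η γ_{k+1}` is nondecreasing in `k`, because `γ` is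
nonincreasing. So `Ψ` decreases on `{2, …, k*}` and increases on `{k*, …, K}`, and its minimum
over `{2, …, K}` is attained at `k*`.
-/

theorem le_of_antitoneOn_of_monotoneOn {α β : Type*} [LinearOrder α] [Preorder β] {f : α → β}
    {a s b x : α} (hanti : AntitoneOn f (Set.Icc a s)) (hmono : MonotoneOn f (Set.Icc s b))
    (hx : x ∈ Set.Icc a b) : f s ≤ f x := by
  rcases le_total x s with hxs | hsx
  · exact hanti ⟨hx.1, hxs⟩ ⟨hx.1.trans hxs, le_rfl⟩ hxs
  · exact hmono ⟨le_rfl, hsx.trans hx.2⟩ ⟨hsx, hx.2⟩ hsx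

section Psi

variable {γ : ℕ → ℝ} {lam η : ℝ}

theorem Psi_add_one {k : ℕ} (hk : 2 ≤ k) :
    Psi γ lam η (k + 1) = Psi γ lam η k + (lam - η * γ (k + 1)) := by
  unfold Psi gfun Gam
  rw [Finset.sum_Icc_succ_top (by omega), if_pos (by omega), if_pos (by omega)]
  push_cast
  ring

theorem Psi_antitoneOn_Icc {s : ℕ} (h : ∀ m, 3 ≤ m → m ≤ s → lam ≤ η * γ m) :
    AntitoneOn (Psi γ lam η) (Set.Icc 2 s) :=
  antitoneOn_of_add_one_le Set.ordConnected_Icc fun m _ hm hm1 => by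
    rw [Psi_add_one hm.1]
    linarith [h (m + 1) (Nat.succ_le_succ hm.1) hm1.2]

theorem Psi_monotoneOn_Icc {s b : ℕ} (hs : 2 ≤ s) (h : ∀ m, s < m → m ≤ b → η * γ m ≤ lam) :
    MonotoneOn (Psi γ lam η) (Set.Icc s b) :=
  monotoneOn_of_le_add_one Set.ordConnected_Icc fun m _ hm hm1 => by
    rw [Psi_add_one (hs.trans hm.1)]
    linarith [h (m + 1) (Nat.lt_add_one_of_le hm.1) hm1.2]

end Psi

theorem stmt18_general (K : ℕ) (γ : ℕ → ℝ) (lam : ℝ)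
    (hmono : ∀ i j : ℕ, 1 ≤ i → i ≤ j → j ≤ K → γ j ≤ γ i)
    (η : ℝ) (hη : 0 ≤ η) :
    ∀ k : ℕ, 2 ≤ k → k ≤ K →
      Psi γ lam η (sSup {k : ℕ | k = 2 ∨ (3 ≤ k ∧ k ≤ K ∧ lam < η * γ k)}) ≤
      Psi γ lam η k := by
  intro k hk2 hkK
  set S : Set ℕ := {k : ℕ | k = 2 ∨ (3 ≤ k ∧ k ≤ K ∧ lam < η * γ k)}
  have hbdd : BddAbove S := ⟨K, fun m hm => by rcases hm with hm | ⟨_, hm, _⟩ <;> omega⟩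
  have hmem : sSup S ∈ S := Nat.sSup_mem ⟨2, Or.inl rfl⟩ hbdd
  have hle : 2 ≤ sSup S := le_csSup hbdd (Or.inl rfl)
  have below (m : ℕ) (hm3 : 3 ≤ m) (hm : m ≤ sSup S) : lam ≤ η * γ m := by
    obtain h2 | ⟨_, hK, hlt⟩ := hmem
    · omega
    · exact hlt.le.trans (mul_le_mul_of_nonneg_left (hmono m _ (by omega) hm hK) hη)
  have above (m : ℕ) (hm : sSup S < m) (hmK : m ≤ K) : η * γ m ≤ lam := by
    by_contra! hlt
    exact hm.not_ge (le_csSup hbdd (Or.inr ⟨by omega, hmK, hlt⟩))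
  exact le_of_antitoneOn_of_monotoneOn (Psi_antitoneOn_Icc below)
    (Psi_monotoneOn_Icc hle above) ⟨hk2, hkK⟩

/-- Correctness of the linear-time search: for K ≥ 2 and η ≥ 0,
k* = max({2} ∪ {k ∈ {3,…,K} : η·γ_k > λ}) minimizes Ψ_η over {2,…,K}. -/
theorem stmt18 (K : ℕ) (hK : 2 ≤ K) (γ : ℕ → ℝ) (lam : ℝ) (hlam : 0 ≤ lam)
    (hmono : ∀ i j : ℕ, 1 ≤ i → i ≤ j → j ≤ K → γ j ≤ γ i)
    (hposK : 0 < γ K)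
    (hsum : ∑ i ∈ Finset.Icc 1 K, γ i = 1)
    (η : ℝ) (hη : 0 ≤ η) :
    ∀ k : ℕ, 2 ≤ k → k ≤ K →
      Psi γ lam η (sSup {k : ℕ | k = 2 ∨ (3 ≤ k ∧ k ≤ K ∧ lam < η * γ k)}) ≤
      Psi γ lam η k :=
  stmt18_general K γ lam hmono η hη
end
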